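/- Let (T,bag) be a regular rooted tree decomposition of a finite graph G that is strongly (q,k)-unbreakable. Let x be a node of T and S ⊆ cone(x) with |S| ≤ k. Then for all u,v ∈ bag(x) \ S: u and v are connected in G[cone(x)] − S (the graph G[cone(x)] with the vertices of S removed) if and only if u and v are connected in the S-restricted bag graph bgraph_S(x). -/

import Mathlib

/-- A finite rooted tree, encoded by its parent function. -/
structure RTree (ι : Type*) where
  root : ι
  parent : ι → ι
  parent_root : parent root = root
  reaches_root : ∀ x : ι, ∃ n : ℕ, parent^[n] x = root

namespace RTree

variable {ι : Type*} (T : RTree ι)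

/-- `T.Anc x y` means `x` is an ancestor of `y` (every node is its own ancestor). -/
def Anc (x y : ι) : Prop := ∃ n : ℕ, T.parent^[n] y = x

/-- `T.IsChild y x` means `y` is a child of `x`. -/
def IsChild (y x : ι) : Prop := y ≠ T.root ∧ T.parent y = x

/-- The underlying undirected graph of the rooted tree. -/
def treeGraph : SimpleGraph ι where
  Adj x y := x ≠ y ∧ (T.IsChild x y ∨ T.IsChild y x)
  symm := ⟨fun x y h => ⟨h.1.symm, h.2.symm⟩⟩
  loopless := ⟨fun x h => h.1 rfl⟩

end RTree

/-- Two vertices are connected by a walk all of whose vertices lie in `U`. -/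
def ConnIn {V : Type*} (G : SimpleGraph V) (U : Set V) (a b : V) : Prop :=
  ∃ p : G.Walk a b, ∀ w ∈ p.support, w ∈ U

theorem ConnIn.symm {V : Type*} {G : SimpleGraph V} {U : Set V} {a b : V}
    (h : ConnIn G U a b) : ConnIn G U b a := by
  obtain ⟨p, hp⟩ := h
  refine ⟨p.reverse, fun w hw => hp w ?_⟩
  rwa [SimpleGraph.Walk.support_reverse, List.mem_reverse] at hw

/-- `X` is `(q,k)`-unbreakable in the induced subgraph `G[U]`: for every separation `(A,B)`
of `G[U]` of order at most `k`, one of the two sides contains at most `q` vertices of `X`. -/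
def UnbreakableIn {V : Type*} (G : SimpleGraph V) (U X : Set V) (q k : ℕ) : Prop :=
  ∀ A B : Set V, A ⊆ U → B ⊆ U → A ∪ B = U →
    (∀ a ∈ A \ B, ∀ b ∈ B \ A, ¬ G.Adj a b) →
    (A ∩ B).ncard ≤ k →
    (A ∩ X).ncard ≤ q ∨ (B ∩ X).ncard ≤ q

/-- A rooted tree decomposition of the graph `G`, with nodes indexed by `ι`. -/
structure TreeDecomp {V : Type*} (G : SimpleGraph V) (ι : Type*) extends RTree ι where
  bag : ι → Set V
  /-- (T1) for every vertex, the set of nodes whose bag contains it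
  is a nonempty subtree of the tree. -/
  bag_subtree : ∀ u : V, ((toRTree.treeGraph).induce {x : ι | u ∈ bag x}).Connected
  /-- (T2) every edge is contained in some bag. -/
  bag_edge : ∀ u v : V, G.Adj u v → ∃ x : ι, u ∈ bag x ∧ v ∈ bag x

namespace TreeDecomp

variable {V ι : Type*} {G : SimpleGraph V} (D : TreeDecomp G ι)

/-- The adhesion of a node: intersection of its bag with the bag of its parent
(empty at the root). -/
def adh (x : ι) : Set V :=
  {v : V | x ≠ D.root ∧ v ∈ D.bag (D.parent x) ∧ v ∈ D.bag x}

/-- The margin of a node. -/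
def mrg (x : ι) : Set V := D.bag x \ D.adh x

/-- The cone at a node: union of the bags at all its descendants. -/
def cone (x : ι) : Set V := {v : V | ∃ y : ι, D.toRTree.Anc x y ∧ v ∈ D.bag y}

/-- The component at a node. -/
def comp (x : ι) : Set V := D.cone x \ D.adh x

/-- A tree decomposition is regular if every non-root node has nonempty margin,
connected component, and every adhesion vertex has a neighbour in the component. -/
def Regular : Prop :=
  ∀ x : ι, x ≠ D.root →
    (D.mrg x).Nonempty ∧
    (G.induce (D.comp x)).Connected ∧
    ∀ u ∈ D.adh x, ∃ w ∈ D.comp x, G.Adj u w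

end TreeDecomp

namespace TreeDecomp

variable {V ι : Type*} {G : SimpleGraph V} (D : TreeDecomp G ι)

/-- The `S`-restricted bag graph at `x`: the vertices of `S ∩ bag(x)` and all children are
removed from the bag graph, and for each child `y` of `x`, two distinct vertices
`u, v ∈ adh(y) \ S` are joined by an edge whenever `G[cone(y)]` contains a `u`–`v` path
disjoint from `S`. (It is encoded as a graph on `V` whose edges lie inside `bag(x) \ S`.) -/
def bgraphS (x : ι) (S : Set V) : SimpleGraph V where
  Adj u v := u ≠ v ∧ u ∈ D.bag x \ S ∧ v ∈ D.bag x \ S ∧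
    (G.Adj u v ∨ ∃ y : ι, D.toRTree.IsChild y x ∧
        u ∈ D.adh y \ S ∧ v ∈ D.adh y \ S ∧ ConnIn G (D.cone y \ S) u v)
  symm := by
    constructor
    rintro u v ⟨hne, hu, hv, h⟩
    refine ⟨hne.symm, hv, hu, ?_⟩
    rcases h with h | ⟨y, hy, huy, hvy, hc⟩
    · exact Or.inl h.symm
    · exact Or.inr ⟨y, hy, hvy, huy, hc.symm⟩
  loopless := ⟨fun u h => h.1 rfl⟩

end TreeDecomp

/-!
A walk of `G[cone x] - S` between vertices of `bag x` splits into steps inside `bag x` and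
excursions into `comp y` for children `y` of `x`. By (T1) such an excursion can only enter and
leave `cone y` through `adh y`, so it is a path of `G[cone y] - S` between two vertices of
`adh y \ S`, i.e. an edge of `bgraph_S(x)`. Conversely, every edge of `bgraph_S(x)` is an edge of
`G` or a path of `G[cone y] - S ⊆ G[cone x] - S`.
-/

namespace RTree

variable {ι : Type*} {T : RTree ι}

theorem eq_root_of_isPeriodicPt {y : ι} {n : ℕ} (hn : 0 < n)
    (h : Function.IsPeriodicPt T.parent n y) : y = T.root := by
  obtain ⟨m, hm⟩ := T.reaches_root y
  calc y = T.parent^[n * m] y := (h.mul_const m).eq.symm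
    _ = T.parent^[n * m - m] (T.parent^[m] y) := by
        rw [← Function.iterate_add_apply, Nat.sub_add_cancel (Nat.le_mul_of_pos_left m hn)]
    _ = T.root := by rw [hm, Function.iterate_fixed T.parent_root]

theorem Anc.refl (x : ι) : T.Anc x x := ⟨0, rfl⟩

namespace IsChild

variable {x y : ι}

theorem anc {z : ι} (h : T.IsChild y x) (hz : T.Anc y z) : T.Anc x z := by
  obtain ⟨n, hn⟩ := hz
  exact ⟨n + 1, by rw [Function.iterate_succ_apply', hn, h.2]⟩

theorem not_anc (h : T.IsChild y x) : ¬ T.Anc y x := by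
  rintro ⟨n, hn⟩
  refine h.1 (eq_root_of_isPeriodicPt n.succ_pos ?_)
  rw [Function.IsPeriodicPt, Function.IsFixedPt, Function.iterate_succ_apply, h.2, hn]

theorem eq_of_adj_of_anc_of_not_anc (h : T.IsChild y x) {w w' : ι}
    (hadj : T.treeGraph.Adj w w') (hw : T.Anc y w) (hw' : ¬ T.Anc y w') : w = y ∧ w' = x := by
  obtain ⟨n, hn⟩ := hw
  rcases hadj.2 with hc | hc
  · cases n with
    | zero => exact ⟨hn, by rw [← hc.2, show w = y from hn, h.2]⟩
    | succ m => exact (hw' ⟨m, by rwa [← hc.2, ← Function.iterate_succ_apply]⟩).elim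
  · exact (hw' ⟨n + 1, by rwa [Function.iterate_succ_apply, hc.2]⟩).elim

theorem mem_of_walk_induce (h : T.IsChild y x) {P : Set ι} {a b : P}
    (p : (T.treeGraph.induce P).Walk a b) (ha : T.Anc y a) (hb : ¬ T.Anc y b) :
    y ∈ P ∧ x ∈ P := by
  induction p with
  | nil => exact absurd ha hb
  | @cons a c b hadj _ ih =>
    by_cases hc : T.Anc y c
    · exact ih hc hb
    · obtain ⟨rfl, rfl⟩ := h.eq_of_adj_of_anc_of_not_anc hadj ha hc
      exact ⟨a.2, c.2⟩

end IsChild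

end RTree

namespace ConnIn

variable {V : Type*} {G : SimpleGraph V} {U U' : Set V} {a b c : V}

theorem refl (ha : a ∈ U) : ConnIn G U a a :=
  ⟨.nil, by simpa using ha⟩

theorem trans (h₁ : ConnIn G U a b) (h₂ : ConnIn G U b c) : ConnIn G U a c := by
  obtain ⟨p, hp⟩ := h₁
  obtain ⟨q, hq⟩ := h₂
  refine ⟨p.append q, fun w hw => ?_⟩
  rw [SimpleGraph.Walk.mem_support_append_iff] at hw
  exact hw.elim (hp w) (hq w)

theorem mono (hU : U ⊆ U') (h : ConnIn G U a b) : ConnIn G U' a b :=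
  let ⟨p, hp⟩ := h
  ⟨p, fun w hw => hU (hp w hw)⟩

theorem cons (hadj : G.Adj a b) (ha : a ∈ U) (h : ConnIn G U b c) : ConnIn G U a c := by
  obtain ⟨p, hp⟩ := h
  refine ⟨.cons hadj p, fun w hw => ?_⟩
  rcases List.mem_cons.mp (SimpleGraph.Walk.support_cons hadj p ▸ hw) with rfl | hw
  · exact ha
  · exact hp w hw

theorem of_adj (hadj : G.Adj a b) (ha : a ∈ U) (hb : b ∈ U) : ConnIn G U a b :=
  cons hadj ha (refl hb)

end ConnIn

namespace TreeDecomp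

variable {V ι : Type*} {G : SimpleGraph V} (D : TreeDecomp G ι)

theorem bag_subset_cone (x : ι) : D.bag x ⊆ D.cone x :=
  fun _ hv => ⟨x, .refl x, hv⟩

theorem adh_subset_cone (y : ι) : D.adh y ⊆ D.cone y :=
  fun _ hv => D.bag_subset_cone y hv.2.2

variable {D} {x y : ι}

theorem cone_subset_of_isChild (h : D.IsChild y x) : D.cone y ⊆ D.cone x :=
  fun _ ⟨z, hz, hvz⟩ => ⟨z, h.anc hz, hvz⟩

theorem adh_subset_bag_of_isChild (h : D.IsChild y x) : D.adh y ⊆ D.bag x :=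
  fun _ hv => h.2 ▸ hv.2.1

theorem mem_adh_of_anc_of_not_anc (h : D.IsChild y x) {u : V} {z z' : ι}
    (hz : D.Anc y z) (hu : u ∈ D.bag z) (hz' : ¬ D.Anc y z') (hu' : u ∈ D.bag z') :
    u ∈ D.adh y := by
  obtain ⟨p⟩ := (D.bag_subtree u).preconnected ⟨z, hu⟩ ⟨z', hu'⟩
  obtain ⟨hy, hx⟩ := h.mem_of_walk_induce p hz hz'
  exact ⟨h.1, h.2 ▸ hx, hy⟩

theorem mem_adh_of_mem_cone_of_mem_bag (h : D.IsChild y x) {v : V}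
    (hc : v ∈ D.cone y) (hb : v ∈ D.bag x) : v ∈ D.adh y :=
  let ⟨_, hz, hvz⟩ := hc
  mem_adh_of_anc_of_not_anc h hz hvz h.not_anc hb

theorem mem_cone_of_mem_comp_of_adj (h : D.IsChild y x) {c d : V}
    (hc : c ∈ D.comp y) (hadj : G.Adj c d) : d ∈ D.cone y := by
  obtain ⟨z, hcz, hdz⟩ := D.bag_edge c d hadj
  by_contra hd
  obtain ⟨z', hz', hcz'⟩ := hc.1
  exact hc.2 (mem_adh_of_anc_of_not_anc h hz' hcz' (fun hz => hd ⟨z, hz, hdz⟩) hcz)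

theorem exists_isChild_mem_comp {v : V} (hv : v ∈ D.cone x) (hb : v ∉ D.bag x) :
    ∃ y, D.IsChild y x ∧ v ∈ D.comp y := by
  obtain ⟨z, ⟨n, hn⟩, hvz⟩ := hv
  induction n generalizing z with
  | zero => exact absurd (hn ▸ hvz) hb
  | succ n ih =>
    rw [Function.iterate_succ_apply'] at hn
    by_cases hr : D.parent^[n] z = D.root
    · exact ih z hvz (hr.trans (by rw [← hn, hr, D.parent_root]))
    · exact ⟨_, ⟨hr, hn⟩, ⟨z, ⟨n, rfl⟩, hvz⟩, fun hadh => hb (hn ▸ hadh.2.1)⟩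

variable {S : Set V}

theorem bgraphS_reachable_of_adj {a b : V} (hadj : G.Adj a b)
    (ha : a ∈ D.bag x \ S) (hb : b ∈ D.bag x \ S) : (D.bgraphS x S).Reachable a b :=
  SimpleGraph.Adj.reachable ⟨hadj.ne, ha, hb, .inl hadj⟩

theorem bgraphS_reachable_of_connIn (h : D.IsChild y x) {a b : V}
    (ha : a ∈ D.adh y \ S) (hb : b ∈ D.adh y \ S) (hab : ConnIn G (D.cone y \ S) a b) :
    (D.bgraphS x S).Reachable a b := by
  obtain rfl | hne := eq_or_ne a b
  · rfl
  · exact SimpleGraph.Adj.reachable ⟨hne, ⟨adh_subset_bag_of_isChild h ha.1, ha.2⟩,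
      ⟨adh_subset_bag_of_isChild h hb.1, hb.2⟩, .inr ⟨y, h, ha, hb, hab⟩⟩

theorem connIn_of_bgraphS_adj {a b : V} (hadj : (D.bgraphS x S).Adj a b) :
    ConnIn G (D.cone x \ S) a b := by
  obtain ⟨-, ha, hb, hG | ⟨y, hy, -, -, hab⟩⟩ := hadj
  · exact .of_adj hG ⟨D.bag_subset_cone x ha.1, ha.2⟩ ⟨D.bag_subset_cone x hb.1, hb.2⟩
  · exact hab.mono fun _ hw => ⟨cone_subset_of_isChild hy hw.1, hw.2⟩

theorem connIn_of_bgraphS_walk {a b : V} (p : (D.bgraphS x S).Walk a b)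
    (hb : b ∈ D.cone x \ S) : ConnIn G (D.cone x \ S) a b := by
  induction p with
  | nil => exact .refl hb
  | cons hadj _ ih => exact (connIn_of_bgraphS_adj hadj).trans (ih hb)

variable (D x S)

/-- The invariant propagated backwards along a walk of `G[cone x] - S` that ends at `v`. -/
def ReachesThroughBag (v c : V) : Prop :=
  (c ∈ D.bag x → (D.bgraphS x S).Reachable c v) ∧
  ∀ y, D.IsChild y x → c ∈ D.comp y →
    ∃ b ∈ D.adh y \ S, ConnIn G (D.cone y \ S) c b ∧ (D.bgraphS x S).Reachable b v

variable {D x S}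

theorem reachesThroughBag_self {v : V} (hv : v ∈ D.bag x) : D.ReachesThroughBag x S v v :=
  ⟨fun _ => .refl v,
    fun _ hy hvy => (hvy.2 (mem_adh_of_mem_cone_of_mem_bag hy hvy.1 hv)).elim⟩

section Step

variable {v c d : V} (hadj : G.Adj c d) (hd : d ∈ D.cone x \ S)
  (hdv : D.ReachesThroughBag x S v d)
include hadj hd hdv

theorem ReachesThroughBag.reachable_of_adj (hc : c ∈ D.bag x \ S) :
    (D.bgraphS x S).Reachable c v := by
  by_cases hdb : d ∈ D.bag x
  · exact (bgraphS_reachable_of_adj hadj hc ⟨hdb, hd.2⟩).trans (hdv.1 hdb)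
  obtain ⟨y, hy, hdy⟩ := exists_isChild_mem_comp hd.1 hdb
  obtain ⟨b, hb, hdb, hbv⟩ := hdv.2 y hy hdy
  have hcy : c ∈ D.adh y :=
    mem_adh_of_mem_cone_of_mem_bag hy (mem_cone_of_mem_comp_of_adj hy hdy hadj.symm) hc.1
  exact (bgraphS_reachable_of_connIn hy ⟨hcy, hc.2⟩ hb
    (.cons hadj ⟨D.adh_subset_cone y hcy, hc.2⟩ hdb)).trans hbv

theorem ReachesThroughBag.exists_adh_of_adj (hy : D.IsChild y x) (hc : c ∈ D.comp y)
    (hcS : c ∉ S) :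
    ∃ b ∈ D.adh y \ S, ConnIn G (D.cone y \ S) c b ∧ (D.bgraphS x S).Reachable b v := by
  have hdy : d ∈ D.cone y := mem_cone_of_mem_comp_of_adj hy hc hadj
  by_cases hdb : d ∈ D.bag x
  · have hd' : d ∈ D.adh y := mem_adh_of_mem_cone_of_mem_bag hy hdy hdb
    exact ⟨d, ⟨hd', hd.2⟩, .of_adj hadj ⟨hc.1, hcS⟩ ⟨hdy, hd.2⟩, hdv.1 hdb⟩
  · obtain ⟨b, hb, hdb, hbv⟩ :=
      hdv.2 y hy ⟨hdy, fun hd' => hdb (adh_subset_bag_of_isChild hy hd')⟩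
    exact ⟨b, hb, .cons hadj ⟨hc.1, hcS⟩ hdb, hbv⟩

theorem ReachesThroughBag.of_adj (hcS : c ∉ S) : D.ReachesThroughBag x S v c :=
  ⟨fun hc => hdv.reachable_of_adj hadj hd ⟨hc, hcS⟩,
    fun _ hy hc => hdv.exists_adh_of_adj hadj hd hy hc hcS⟩

end Step

theorem reachesThroughBag_of_walk {c v : V} (p : G.Walk c v)
    (hp : ∀ w ∈ p.support, w ∈ D.cone x \ S) (hv : v ∈ D.bag x) :
    D.ReachesThroughBag x S v c := by
  induction p with
  | nil => exact reachesThroughBag_self hv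
  | cons hadj q ih =>
    have hq : ∀ w ∈ q.support, w ∈ D.cone x \ S :=
      fun w hw => hp w (List.mem_cons_of_mem _ hw)
    exact (ih hq hv).of_adj hadj (hq _ q.start_mem_support) (hp _ (List.mem_cons_self ..)).2

end TreeDecomp

theorem stmt5_general {V ι : Type*} {G : SimpleGraph V}
    (D : TreeDecomp G ι)
    (x : ι) (S : Set V)
    (u v : V) (hu : u ∈ D.bag x \ S) (hv : v ∈ D.bag x \ S) :
    ConnIn G (D.cone x \ S) u v ↔ (D.bgraphS x S).Reachable u v := by
  constructor
  · rintro ⟨p, hp⟩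
    exact (D.reachesThroughBag_of_walk p hp hv.1).1 hu.1
  · rintro ⟨p⟩
    exact D.connIn_of_bgraphS_walk p ⟨D.bag_subset_cone x hv.1, hv.2⟩

/-- For a regular, strongly `(q,k)`-unbreakable rooted tree
decomposition, a node `x` and `S ⊆ cone(x)` with `|S| ≤ k`, two vertices
`u, v ∈ bag(x) \ S` are connected in `G[cone(x)] − S` iff they are connected in the
`S`-restricted bag graph `bgraph_S(x)`. -/
theorem stmt5 {V ι : Type*} [Fintype V] [Fintype ι] {G : SimpleGraph V}
    (D : TreeDecomp G ι) (hreg : D.Regular) (q k : ℕ)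
    (hunb : ∀ x : ι, UnbreakableIn G (D.cone x) (D.bag x) q k)
    (x : ι) (S : Set V) (hScone : S ⊆ D.cone x) (hSk : S.ncard ≤ k)
    (u v : V) (hu : u ∈ D.bag x \ S) (hv : v ∈ D.bag x \ S) :
    ConnIn G (D.cone x \ S) u v ↔ (D.bgraphS x S).Reachable u v :=
  stmt5_general D x S u v hu hv
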